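/- Let G be a finite simple connected graph, d ≥ 1 an integer, and u a vertex of G with 1 ≤ deg(u) ≤ d whose neighborhood N(u) is monochromatic. Then ({u}, V(G) ∖ {u}) is a minimal d-cut of G, and it is the only minimal d-cut of G whose edge cut contains an edge incident with u; that is, every minimal d-cut whose edge cut contains an edge incident with u has edge cut exactly {uw : w ∈ N(u)}. -/

import Mathlib

variable {V : Type*}

/-- A `d`-cut of a simple graph `G`: a partition `(A, B)` of the vertex set into two
nonempty parts such that every vertex of `A` has at most `d` neighbors in `B` and
every vertex of `B` has at most `d` neighbors in `A`. -/
def IsDCut (G : SimpleGraph V) (d : ℕ) (A B : Set V) : Prop :=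
  A.Nonempty ∧ B.Nonempty ∧ Disjoint A B ∧ A ∪ B = Set.univ ∧
    (∀ v ∈ A, (G.neighborSet v ∩ B).ncard ≤ d) ∧
    (∀ v ∈ B, (G.neighborSet v ∩ A).ncard ≤ d)

/-- A vertex set `T` is monochromatic if every `d`-cut of `G` has `T` entirely on one side. -/
def Monochromatic (G : SimpleGraph V) (d : ℕ) (T : Set V) : Prop :=
  ∀ A B : Set V, IsDCut G d A B → T ⊆ A ∨ T ⊆ B

/-- The edge cut of a cut `(A, B)`: the set of edges of `G` with one endpoint in `A`
and the other endpoint in `B`. -/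
def edgeCut (G : SimpleGraph V) (A B : Set V) : Set (Sym2 V) :=
  {e | e ∈ G.edgeSet ∧ ∃ u v, e = s(u, v) ∧ u ∈ A ∧ v ∈ B}

/-- A minimal `d`-cut: no `d`-cut has an edge cut that is a proper subset of its edge cut. -/
def IsMinimalDCut (G : SimpleGraph V) (d : ℕ) (A B : Set V) : Prop :=
  IsDCut G d A B ∧ ∀ A' B' : Set V, IsDCut G d A' B' → ¬ edgeCut G A' B' ⊂ edgeCut G A B

/-- A maximal `d`-cut: no `d`-cut has an edge cut that properly contains its edge cut. -/
def IsMaximalDCut (G : SimpleGraph V) (d : ℕ) (A B : Set V) : Prop :=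
  IsDCut G d A B ∧ ∀ A' B' : Set V, IsDCut G d A' B' → ¬ edgeCut G A B ⊂ edgeCut G A' B'

/-!
Since `N(u)` is monochromatic, every `d`-cut either cuts all edges at `u` or none of them.
In a connected graph every `d`-cut cuts some edge, so no `d`-cut has its edge cut strictly
inside the star of `u`; and a minimal `d`-cut cutting an edge at `u` contains the star, which
is itself the edge cut of the `d`-cut `({u}, V ∖ {u})`, hence equals it.
-/

section

variable {G : SimpleGraph V} {d : ℕ} {A B : Set V}

lemma mk_mem_edgeCut_compl_iff {x y : V} :
    s(x, y) ∈ edgeCut G A Aᶜ ↔ G.Adj x y ∧ (x ∈ A ↔ y ∉ A) := by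
  constructor
  · rintro ⟨hxy, a, b, hab, ha, hb⟩
    rcases Sym2.eq_iff.mp hab with ⟨rfl, rfl⟩ | ⟨rfl, rfl⟩
    · exact ⟨hxy, iff_of_true ha hb⟩
    · exact ⟨hxy, iff_of_false hb (not_not.mpr ha)⟩
  · rintro ⟨hxy, hA⟩
    by_cases hx : x ∈ A
    · exact ⟨hxy, x, y, rfl, hx, hA.mp hx⟩
    · exact ⟨hxy, y, x, Sym2.eq_swap, not_not.mp (mt hA.mpr hx), hx⟩

lemma edgeCut_singleton_compl (u : V) : edgeCut G {u} {u}ᶜ = G.incidenceSet u := by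
  ext e
  induction e using Sym2.ind with
  | _ x y =>
    refine mk_mem_edgeCut_compl_iff.trans (and_congr_right fun hxy => ?_)
    simp only [Set.mem_singleton_iff, Sym2.mem_iff]
    grind [hxy.ne]

lemma IsDCut.eq_compl (h : IsDCut G d A B) : B = Aᶜ :=
  (IsCompl.compl_eq ⟨h.2.2.1, codisjoint_iff.mpr h.2.2.2.1⟩).symm

lemma IsDCut.edgeCut_nonempty (hconn : G.Connected) (h : IsDCut G d A B) :
    (edgeCut G A B).Nonempty := by
  obtain rfl := h.eq_compl
  obtain ⟨⟨a, ha⟩, ⟨b, hb⟩, -⟩ := h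
  obtain ⟨⟨⟨x, y⟩, hxy⟩, -, hx, hy⟩ := (hconn a b).some.exists_boundary_dart A ha hb
  exact ⟨s(x, y), mk_mem_edgeCut_compl_iff.mpr ⟨hxy, iff_of_true hx hy⟩⟩

lemma isDCut_singleton_compl (hd : 1 ≤ d) {u : V} (h1 : (G.neighborSet u).Nonempty)
    (h2 : (G.neighborSet u).ncard ≤ d) : IsDCut G d {u} {u}ᶜ := by
  obtain ⟨w, hw⟩ := h1
  refine ⟨⟨u, rfl⟩, ⟨w, hw.ne.symm⟩, disjoint_compl_right, Set.union_compl_self _, ?_, ?_⟩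
  · rintro v rfl
    have : G.neighborSet v ⊆ {v}ᶜ := fun x hx => (G.ne_of_adj hx).symm
    rwa [Set.inter_eq_left.mpr this]
  · intro v _
    calc (G.neighborSet v ∩ {u}).ncard ≤ ({u} : Set V).ncard :=
          Set.ncard_le_ncard Set.inter_subset_right
      _ = 1 := Set.ncard_singleton u
      _ ≤ d := hd

lemma Monochromatic.incidenceSet_subset_edgeCut_or_disjoint {u : V}
    (hmono : Monochromatic G d (G.neighborSet u)) (h : IsDCut G d A B) :
    G.incidenceSet u ⊆ edgeCut G A B ∨ Disjoint (G.incidenceSet u) (edgeCut G A B) := by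
  have hN := hmono A B h
  obtain rfl := h.eq_compl
  obtain ⟨c, hc⟩ : ∃ c : Prop, ∀ w ∈ G.neighborSet u, (w ∈ A ↔ c) :=
    hN.elim (fun hA => ⟨True, fun w hw => iff_true_intro (hA hw)⟩)
      (fun hA => ⟨False, fun w hw => iff_false_intro (hA hw)⟩)
  have forall_incidenceSet {P : Sym2 V → Prop} (hP : ∀ w, G.Adj u w → P s(u, w)) :
      ∀ e ∈ G.incidenceSet u, P e := by
    rintro e ⟨he, hue⟩
    obtain ⟨w, rfl⟩ := Sym2.mem_iff_exists.mp hue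
    exact hP w he
  -- an edge `uw` crosses iff `u ∈ A ↔ w ∉ A`, and `w ∈ A ↔ c` does not depend on `w`
  by_cases hcross : u ∈ A ↔ ¬c
  · refine .inl (forall_incidenceSet fun w hw => mk_mem_edgeCut_compl_iff.mpr ⟨hw, ?_⟩)
    rwa [hc w hw]
  · refine .inr (Set.disjoint_left.mpr (forall_incidenceSet fun w hw hcut => hcross ?_))
    rw [← hc w hw]
    exact (mk_mem_edgeCut_compl_iff.mp hcut).2

end

theorem low_degree_mono_neighborhood_minimal (G : SimpleGraph V) (d : ℕ)
    (hd : 1 ≤ d) (hconn : G.Connected) (u : V)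
    (h1 : (G.neighborSet u).Nonempty) (h2 : (G.neighborSet u).ncard ≤ d)
    (hmono : Monochromatic G d (G.neighborSet u)) :
    IsMinimalDCut G d {u} {u}ᶜ ∧
    (∀ A B : Set V, IsMinimalDCut G d A B → (∃ e ∈ edgeCut G A B, u ∈ e) →
      edgeCut G A B = {e | e ∈ G.edgeSet ∧ u ∈ e}) := by
  have hcut := isDCut_singleton_compl hd h1 h2
  refine ⟨⟨hcut, fun A B h hlt => ?_⟩, fun A B hmin ⟨e, he, hue⟩ => ?_⟩
  · rw [edgeCut_singleton_compl] at hlt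
    rcases hmono.incidenceSet_subset_edgeCut_or_disjoint h with hsub | hdisj
    · exact hlt.2 hsub
    · obtain ⟨e, he⟩ := h.edgeCut_nonempty hconn
      exact Set.disjoint_right.mp hdisj he (hlt.1 he)
  · rcases hmono.incidenceSet_subset_edgeCut_or_disjoint hmin.1 with hsub | hdisj
    · refine (hsub.eq_or_ssubset.resolve_right fun hlt => hmin.2 _ _ hcut ?_).symm
      rwa [edgeCut_singleton_compl]
    · exact absurd he (Set.disjoint_left.mp hdisj ⟨he.1, hue⟩)
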